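/- Let π be the distribution on [0,1]² × {0,1} with X₁ ∼ Uniform([0,1]), X₂ | X₁ = x₁ distributed as x₁·Uniform([0.5,1]) + (1−x₁)·Uniform([0,0.5)), and P(Y = 1 | X₂ = x₂) = 1{x₂ ≥ 0.5}. Then P(Y = 1 | X₁ = x₁) = x₁, so the predictor g(x) = x₁ satisfies ECE_π(g) = 0; nevertheless ECE_π is discontinuous at g in the L^∞ topology, since there exist predictors g_δ with ‖g_δ − g‖_∞ < δ and ECE_π(g_δ) ≥ 1/3 − 2δ. -/

import Mathlib

open MeasureTheory Filter Set Topology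

/-- The expected calibration error `ECE_π(g) = E[|E[Y | g(X)] - g(X)|]`. -/
noncomputable def ECE {α : Type*} [MeasurableSpace α] (π : Measure (α × ℝ)) (g : α → ℝ) : ℝ :=
  ∫ q, |(π[(fun r : α × ℝ => r.2) |
      MeasurableSpace.comap (fun r : α × ℝ => g r.1) Real.measurableSpace]) q - g q.1| ∂π

/-- The joint density of `(X₁, X₂)`: `X₁ ∼ Uniform([0,1])` and
`X₂ | X₁ = x₁ ∼ x₁·Uniform([1/2, 1]) + (1 − x₁)·Uniform([0, 1/2))`. -/
noncomputable def jointDens (x : ℝ × ℝ) : ℝ :=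
  if x.1 ∈ Set.Icc (0 : ℝ) 1 ∧ x.2 ∈ Set.Icc (0 : ℝ) 1 then
    (if (1/2 : ℝ) ≤ x.2 then 2 * x.1 else 2 * (1 - x.1))
  else 0

/-- The distribution `π` of `((X₁, X₂), Y)` where `(X₁, X₂)` has density `jointDens` and
`Y = 1{X₂ ≥ 1/2}` (so that `P(Y = 1 | X₂ = x₂) = 1{x₂ ≥ 1/2}`). -/
noncomputable def propDist : Measure ((ℝ × ℝ) × ℝ) :=
  (volume.withDensity fun x : ℝ × ℝ => ENNReal.ofReal (jointDens x)).map
    (fun x => (x, if (1/2 : ℝ) ≤ x.2 then (1 : ℝ) else 0))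

/-!
Under `π`, given `X₁ = t ∈ [0,1]` the label `Y = 1{X₂ ≥ 1/2}` equals `1` with probability `t`, so
the integral against `π` of any function of `(X₁, Y)` is `∫₀¹ (t h(t, 1) + (1 - t) h(t, 0)) dt`.
This gives `E[Y | X₁] = X₁`, hence `ECE(X₁) = 0`. The staircase predictor `g_δ` is `δ`-close to `X₁`,
yet `Y` can be read off the fractional part of `g_δ(X) / δ`; so `E[Y | g_δ(X)] = Y` and
`ECE(g_δ) = E|Y - g_δ(X)| ≥ E|Y - X₁| - δ = 1/3 - δ`.
-/

section CalibrationError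

variable {α : Type*} [MeasurableSpace α] {π : Measure (α × ℝ)} {g : α → ℝ}

lemma ECE_eq_zero_of_condExp_ae_eq
    (h : π[(fun r : α × ℝ => r.2) | MeasurableSpace.comap (fun r : α × ℝ => g r.1)
      Real.measurableSpace] =ᵐ[π] fun r => g r.1) :
    ECE π g = 0 := by
  refine (integral_congr_ae ?_).trans (integral_zero _ _)
  filter_upwards [h] with q hq
  simp [hq]

lemma condExp_comap_ae_eq_self {Ω β : Type*} [mΩ : MeasurableSpace Ω] [MeasurableSpace β]
    {μ : Measure Ω} [IsFiniteMeasure μ] {f : Ω → β} (hf : Measurable f) {Y : Ω → ℝ}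
    (hY : Integrable Y μ) {φ : β → ℝ} (hφ : Measurable φ) (hYφ : Y =ᵐ[μ] φ ∘ f) :
    μ[Y | MeasurableSpace.comap f inferInstance] =ᵐ[μ] Y := by
  have hm : MeasurableSpace.comap f inferInstance ≤ mΩ := hf.comap_le
  have : IsFiniteMeasure (μ.trim hm) := isFiniteMeasure_trim hm
  have hφf : StronglyMeasurable[MeasurableSpace.comap f inferInstance] (φ ∘ f) :=
    (hφ.comp (comap_measurable f)).stronglyMeasurable
  calc μ[Y | _] =ᵐ[μ] μ[φ ∘ f | _] := condExp_congr_ae hYφ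
    _ =ᵐ[μ] φ ∘ f := condExp_of_aestronglyMeasurable' hm hφf.aestronglyMeasurable
        (hY.congr hYφ)
    _ =ᵐ[μ] Y := hYφ.symm

lemma ECE_eq_integral_abs_sub [IsFiniteMeasure π] (hg : Measurable g)
    (hY : Integrable (fun r : α × ℝ => r.2) π) {φ : ℝ → ℝ} (hφ : Measurable φ)
    (hYφ : (fun r : α × ℝ => r.2) =ᵐ[π] fun r => φ (g r.1)) :
    ECE π g = ∫ q, |q.2 - g q.1| ∂π := by
  refine integral_congr_ae ?_
  filter_upwards [condExp_comap_ae_eq_self (f := fun r : α × ℝ => g r.1)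
    (hg.comp measurable_fst) hY hφ hYφ] with q hq
  rw [hq]

end CalibrationError

noncomputable def attachLabel (x : ℝ × ℝ) : (ℝ × ℝ) × ℝ :=
  (x, if (1/2 : ℝ) ≤ x.2 then (1 : ℝ) else 0)

noncomputable def featureDist : Measure (ℝ × ℝ) :=
  volume.withDensity fun x : ℝ × ℝ => ENNReal.ofReal (jointDens x)

lemma propDist_eq_map : propDist = featureDist.map attachLabel := rfl

lemma measurable_attachLabel : Measurable attachLabel :=
  measurable_id.prodMk <| Measurable.ite (measurableSet_le measurable_const measurable_snd)
    measurable_const measurable_const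

lemma measurable_jointDens : Measurable jointDens :=
  Measurable.ite
    ((measurableSet_Icc.preimage measurable_fst).inter (measurableSet_Icc.preimage measurable_snd))
    (Measurable.ite (measurableSet_le measurable_const measurable_snd)
      (measurable_const.mul measurable_fst)
      (measurable_const.mul (measurable_const.sub measurable_fst)))
    measurable_const

lemma jointDens_nonneg (x : ℝ × ℝ) : 0 ≤ jointDens x := by
  unfold jointDens
  split_ifs with h
  · linarith [h.1.1]
  · linarith [h.1.2]
  · rfl

lemma jointDens_of_mem {x : ℝ × ℝ} (hx : x ∈ Icc (0 : ℝ) 1 ×ˢ Icc (0 : ℝ) 1) :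
    jointDens x = if (1/2 : ℝ) ≤ x.2 then 2 * x.1 else 2 * (1 - x.1) :=
  if_pos hx

lemma jointDens_of_notMem {x : ℝ × ℝ} (hx : x ∉ Icc (0 : ℝ) 1 ×ˢ Icc (0 : ℝ) 1) :
    jointDens x = 0 :=
  if_neg hx

lemma setIntegral_Icc_ite_half (a b : ℝ) :
    ∫ t in Icc (0 : ℝ) 1, (if (1/2 : ℝ) ≤ t then a else b) = (a + b) / 2 := by
  have hb : EqOn (fun t : ℝ => if (1/2 : ℝ) ≤ t then a else b) (fun _ => b) (Ico 0 (1/2)) :=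
    fun t ht => if_neg (not_le.2 ht.2)
  have ha : EqOn (fun t : ℝ => if (1/2 : ℝ) ≤ t then a else b) (fun _ => a) (Icc (1/2) 1) :=
    fun t ht => if_pos ht.1
  rw [← Ico_union_Icc_eq_Icc (by norm_num : (0 : ℝ) ≤ 1/2) (by norm_num),
    setIntegral_union (disjoint_left.2 fun t h₀ h₁ => h₀.2.not_ge h₁.1) measurableSet_Icc
      ((integrableOn_const (by simp)).congr_fun hb.symm measurableSet_Ico)
      ((integrableOn_const (by simp)).congr_fun ha.symm measurableSet_Icc),
    setIntegral_congr_fun measurableSet_Ico hb, setIntegral_congr_fun measurableSet_Icc ha]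
  norm_num
  ring

lemma integral_jointDens_mul_ite {h₁ h₀ : ℝ → ℝ} (hh₁ : Measurable h₁) (hh₀ : Measurable h₀)
    {C : ℝ} (hC : ∀ t ∈ Icc (0 : ℝ) 1, |h₁ t| ≤ C ∧ |h₀ t| ≤ C) :
    ∫ x : ℝ × ℝ, jointDens x * (if (1/2 : ℝ) ≤ x.2 then h₁ x.1 else h₀ x.1) =
      ∫ t in (0 : ℝ)..1, (t * h₁ t + (1 - t) * h₀ t) := by
  set F : ℝ × ℝ → ℝ := fun x => jointDens x * (if (1/2 : ℝ) ≤ x.2 then h₁ x.1 else h₀ x.1)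
  have hF : IntegrableOn F (Icc (0 : ℝ) 1 ×ˢ Icc (0 : ℝ) 1) := by
    refine Measure.integrableOn_of_bounded (M := 2 * C)
      (isCompact_Icc.prod isCompact_Icc).measure_lt_top.ne
      (measurable_jointDens.mul (Measurable.ite (measurableSet_le measurable_const measurable_snd)
        (hh₁.comp measurable_fst) (hh₀.comp measurable_fst))).aestronglyMeasurable ?_
    filter_upwards [ae_restrict_mem (measurableSet_Icc.prod measurableSet_Icc)] with x hx
    obtain ⟨hC₁, hC₀⟩ := hC x.1 hx.1
    have hd : jointDens x ≤ 2 := by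
      rw [jointDens_of_mem hx]
      split_ifs <;> linarith [hx.1.1, hx.1.2]
    rw [Real.norm_eq_abs, abs_mul, abs_of_nonneg (jointDens_nonneg x)]
    refine mul_le_mul hd ?_ (abs_nonneg _) zero_le_two
    split_ifs <;> assumption
  rw [← setIntegral_eq_integral_of_forall_compl_eq_zero (s := Icc (0 : ℝ) 1 ×ˢ Icc (0 : ℝ) 1)
      fun x hx => by simp only [jointDens_of_notMem hx, zero_mul],
    Measure.volume_eq_prod, ← Measure.prod_restrict,
    integral_prod F (by rwa [Measure.prod_restrict, ← Measure.volume_eq_prod]),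
    intervalIntegral.integral_of_le zero_le_one, ← integral_Icc_eq_integral_Ioc]
  refine setIntegral_congr_fun measurableSet_Icc fun t ht => ?_
  have hinner : EqOn (fun s => F (t, s))
      (fun s => if (1/2 : ℝ) ≤ s then 2 * t * h₁ t else 2 * (1 - t) * h₀ t) (Icc 0 1) := by
    intro s hs
    simp only [F, jointDens_of_mem (show (t, s) ∈ Icc (0 : ℝ) 1 ×ˢ Icc (0 : ℝ) 1 from ⟨ht, hs⟩)]
    split_ifs <;> ring
  rw [setIntegral_congr_fun measurableSet_Icc hinner, setIntegral_Icc_ite_half]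
  ring

lemma integral_propDist {f : (ℝ × ℝ) × ℝ → ℝ} (hf : Measurable f) :
    ∫ q, f q ∂propDist = ∫ x, jointDens x * f (attachLabel x) := by
  rw [propDist_eq_map, integral_map measurable_attachLabel.aemeasurable hf.aestronglyMeasurable,
    featureDist, integral_withDensity_eq_integral_toReal_smul
      (measurable_jointDens.ennreal_ofReal) (ae_of_all _ fun _ => ENNReal.ofReal_lt_top)]
  simp only [ENNReal.toReal_ofReal (jointDens_nonneg _), smul_eq_mul]

lemma integral_propDist_eq_intervalIntegral {f : (ℝ × ℝ) × ℝ → ℝ} (hf : Measurable f)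
    {h₁ h₀ : ℝ → ℝ} (hh₁ : Measurable h₁) (hh₀ : Measurable h₀)
    {C : ℝ} (hC : ∀ t ∈ Icc (0 : ℝ) 1, |h₁ t| ≤ C ∧ |h₀ t| ≤ C)
    (hfh : ∀ x, f (attachLabel x) = if (1/2 : ℝ) ≤ x.2 then h₁ x.1 else h₀ x.1) :
    ∫ q, f q ∂propDist = ∫ t in (0 : ℝ)..1, (t * h₁ t + (1 - t) * h₀ t) := by
  simp only [integral_propDist hf, hfh, integral_jointDens_mul_ite hh₁ hh₀ hC]

instance : IsProbabilityMeasure propDist := by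
  have h := integral_propDist_eq_intervalIntegral (f := fun _ => 1) (h₁ := fun _ => 1)
    (h₀ := fun _ => 1) measurable_const measurable_const measurable_const (C := 1)
    (fun _ _ => by simp) (fun _ => by simp)
  norm_num [measureReal_def] at h
  exact ⟨(ENNReal.toReal_eq_one_iff _).1 h⟩

lemma ae_propDist {p : (ℝ × ℝ) × ℝ → Prop} (hp : MeasurableSet {q | p q})
    (h : ∀ x ∈ Icc (0 : ℝ) 1 ×ˢ Icc (0 : ℝ) 1, p (attachLabel x)) : ∀ᵐ q ∂propDist, p q := by
  rw [propDist_eq_map, ae_map_iff measurable_attachLabel.aemeasurable hp, featureDist,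
    ae_withDensity_iff measurable_jointDens.ennreal_ofReal]
  refine ae_of_all _ fun x hx => h x (not_imp_comm.1 jointDens_of_notMem fun h0 => hx ?_)
  simp [h0]

lemma integrable_label : Integrable (fun q : (ℝ × ℝ) × ℝ => q.2) propDist := by
  refine .of_bound measurable_snd.aestronglyMeasurable 1 <|
    ae_propDist (measurableSet_le measurable_snd.norm measurable_const) fun x _ => ?_
  simp only [attachLabel]
  split_ifs <;> simp

lemma integrable_fst_fst : Integrable (fun q : (ℝ × ℝ) × ℝ => q.1.1) propDist := by
  refine .of_bound measurable_fst.fst.aestronglyMeasurable 1 <|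
    ae_propDist (measurableSet_le measurable_fst.fst.norm measurable_const) fun x hx => ?_
  simp only [attachLabel, Real.norm_eq_abs]
  exact abs_le.2 ⟨by linarith [hx.1.1], hx.1.2⟩

/-- Over `{X₁ ∈ B}`, both `Y` and `X₁` integrate to `∫_{B ∩ [0,1]} t dt`. -/
theorem propDist_condExp_label_fst :
    propDist[(fun q : (ℝ × ℝ) × ℝ => q.2) |
        MeasurableSpace.comap (fun q : (ℝ × ℝ) × ℝ => q.1.1) Real.measurableSpace]
      =ᵐ[propDist] fun q => q.1.1 := by
  have hm := (measurable_fst.fst : Measurable fun q : (ℝ × ℝ) × ℝ => q.1.1).comap_le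
  refine (ae_eq_condExp_of_forall_setIntegral_eq hm integrable_label
    (fun s _ _ => integrable_fst_fst.integrableOn) (fun s hs _ => ?_)
    (comap_measurable _).stronglyMeasurable.aestronglyMeasurable).symm
  obtain ⟨B, hB, rfl⟩ := hs
  have hs := hB.preimage (measurable_fst.fst : Measurable fun q : (ℝ × ℝ) × ℝ => q.1.1)
  rw [← integral_indicator hs, ← integral_indicator hs,
    integral_propDist_eq_intervalIntegral (measurable_fst.fst.indicator hs)
      (h₁ := B.indicator id) (h₀ := B.indicator id)
      (measurable_id.indicator hB) (measurable_id.indicator hB) (C := 1) ?_ ?_,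
    integral_propDist_eq_intervalIntegral (measurable_snd.indicator hs)
      (h₁ := B.indicator 1) (h₀ := 0)
      (measurable_const.indicator hB) measurable_const (C := 1) ?_ ?_]
  · congr 1
    ext t
    by_cases ht : t ∈ B
    · simp [ht]
      ring
    · simp [ht]
  · intro t _
    by_cases ht : t ∈ B <;> simp [ht]
  · intro x
    by_cases hx : x.1 ∈ B <;> simp [attachLabel, hx]
  · intro t ht
    by_cases htB : t ∈ B <;> simp [htB, abs_of_nonneg ht.1, ht.2]
  · intro x
    by_cases hx : x.1 ∈ B <;> simp [attachLabel, hx]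

noncomputable def staircase₀ (δ z : ℝ) : ℝ := ((⌊z / δ⌋ : ℝ) + 1 - δ / 4) * δ

noncomputable def staircase₁ (δ z : ℝ) : ℝ := ((⌊z / δ⌋ : ℝ) + δ / 4) * δ

noncomputable def staircasePredictor (δ : ℝ) (x : ℝ × ℝ) : ℝ :=
  if (1/2 : ℝ) ≤ x.2 then staircase₁ δ x.1 else staircase₀ δ x.1

/-- The fractional part of `v / δ` is `δ / 4` on `staircase₁` and `1 - δ / 4` on `staircase₀`. -/
noncomputable def decodeLabel (δ v : ℝ) : ℝ :=
  if Int.fract (v / δ) = δ / 4 then 1 else 0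

lemma measurable_staircase₀ (δ : ℝ) : Measurable (staircase₀ δ) := by
  unfold staircase₀
  fun_prop

lemma measurable_staircase₁ (δ : ℝ) : Measurable (staircase₁ δ) := by
  unfold staircase₁
  fun_prop

lemma measurable_staircasePredictor (δ : ℝ) : Measurable (staircasePredictor δ) :=
  Measurable.ite (measurableSet_le measurable_const measurable_snd)
    ((measurable_staircase₁ δ).comp measurable_fst) ((measurable_staircase₀ δ).comp measurable_fst)

lemma measurable_decodeLabel (δ : ℝ) : Measurable (decodeLabel δ) :=
  Measurable.ite
    (measurableSet_eq_fun (measurable_fract.comp (measurable_id.div_const δ)) measurable_const)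
    measurable_const measurable_const

lemma staircase₀_sub_self {δ : ℝ} (hδ : δ ≠ 0) (z : ℝ) :
    staircase₀ δ z - z = (1 - δ / 4 - Int.fract (z / δ)) * δ := by
  rw [staircase₀, Int.fract]
  linear_combination div_mul_cancel₀ z hδ

lemma staircase₁_sub_self {δ : ℝ} (hδ : δ ≠ 0) (z : ℝ) :
    staircase₁ δ z - z = (δ / 4 - Int.fract (z / δ)) * δ := by
  rw [staircase₁, Int.fract]
  linear_combination div_mul_cancel₀ z hδ

lemma abs_staircase₀_sub_self_lt {δ : ℝ} (hδ : 0 < δ) (hδ4 : δ < 4) (z : ℝ) :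
    |staircase₀ δ z - z| < δ := by
  rw [staircase₀_sub_self hδ.ne', abs_mul, abs_of_pos hδ, mul_lt_iff_lt_one_left hδ, abs_lt]
  constructor <;> linarith [Int.fract_nonneg (z / δ), Int.fract_lt_one (z / δ)]

lemma abs_staircase₁_sub_self_lt {δ : ℝ} (hδ : 0 < δ) (hδ4 : δ < 4) (z : ℝ) :
    |staircase₁ δ z - z| < δ := by
  rw [staircase₁_sub_self hδ.ne', abs_mul, abs_of_pos hδ, mul_lt_iff_lt_one_left hδ, abs_lt]
  constructor <;> linarith [Int.fract_nonneg (z / δ), Int.fract_lt_one (z / δ)]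

lemma abs_staircasePredictor_sub_lt {δ : ℝ} (hδ : 0 < δ) (hδ4 : δ < 4) (x : ℝ × ℝ) :
    |staircasePredictor δ x - x.1| < δ := by
  unfold staircasePredictor
  split_ifs
  · exact abs_staircase₁_sub_self_lt hδ hδ4 x.1
  · exact abs_staircase₀_sub_self_lt hδ hδ4 x.1

lemma decodeLabel_staircasePredictor {δ : ℝ} (hδ : 0 < δ) (hδ2 : δ < 2) (x : ℝ × ℝ) :
    decodeLabel δ (staircasePredictor δ x) = if (1/2 : ℝ) ≤ x.2 then 1 else 0 := by
  unfold decodeLabel staircasePredictor staircase₀ staircase₁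
  split_ifs with h h' h'
  · rfl
  · rw [mul_div_cancel_right₀ _ hδ.ne', Int.fract_intCast_add,
      Int.fract_eq_self.2 ⟨by linarith, by linarith⟩] at h'
    exact absurd rfl h'
  · rw [mul_div_cancel_right₀ _ hδ.ne', add_sub_assoc, Int.fract_intCast_add,
      Int.fract_eq_self.2 ⟨by linarith, by linarith⟩] at h'
    linarith
  · rfl

lemma label_ae_eq_decodeLabel_staircasePredictor {δ : ℝ} (hδ : 0 < δ) (hδ2 : δ < 2) :
    (fun q : (ℝ × ℝ) × ℝ => q.2) =ᵐ[propDist]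
      fun q => decodeLabel δ (staircasePredictor δ q.1) :=
  ae_propDist (measurableSet_eq_fun measurable_snd
    ((measurable_decodeLabel δ).comp ((measurable_staircasePredictor δ).comp measurable_fst)))
    fun x _ => (decodeLabel_staircasePredictor hδ hδ2 x).symm

lemma abs_one_sub_staircase₁_bounds {δ : ℝ} (hδ : 0 < δ) (hδ4 : δ < 4) {t : ℝ}
    (ht : t ∈ Icc (0 : ℝ) 1) :
    1 - t - δ ≤ |1 - staircase₁ δ t| ∧ |1 - staircase₁ δ t| ≤ 2 + δ := by
  have := abs_lt.1 (abs_staircase₁_sub_self_lt hδ hδ4 t)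
  rw [le_abs, abs_le]
  exact ⟨.inl (by linarith), by constructor <;> linarith [ht.1, ht.2]⟩

lemma abs_staircase₀_bounds {δ : ℝ} (hδ : 0 < δ) (hδ4 : δ < 4) {t : ℝ} (ht : t ∈ Icc (0 : ℝ) 1) :
    t - δ ≤ |staircase₀ δ t| ∧ |staircase₀ δ t| ≤ 2 + δ := by
  have := abs_lt.1 (abs_staircase₀_sub_self_lt hδ hδ4 t)
  rw [le_abs, abs_le]
  exact ⟨.inl (by linarith), by constructor <;> linarith [ht.1, ht.2]⟩

lemma intervalIntegrable_of_abs_le {h : ℝ → ℝ} {a b C : ℝ} (hab : a ≤ b) (hh : Measurable h)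
    (hC : ∀ t ∈ Icc a b, |h t| ≤ C) : IntervalIntegrable h volume a b :=
  (intervalIntegrable_iff_integrableOn_Icc_of_le hab).2 <|
    Measure.integrableOn_of_bounded measure_Icc_lt_top.ne hh.aestronglyMeasurable <|
      (ae_restrict_mem measurableSet_Icc).mono hC

lemma integral_quadratic_zero_one (δ : ℝ) :
    ∫ t in (0 : ℝ)..1, (t * (1 - t - δ) + (1 - t) * (t - δ)) = 1/3 - δ := by
  have h : ∀ t ∈ uIcc (0 : ℝ) 1, HasDerivAt (fun t : ℝ => t ^ 2 - 2 / 3 * t ^ 3 - δ * t)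
      (t * (1 - t - δ) + (1 - t) * (t - δ)) t := fun t _ =>
    (((hasDerivAt_pow 2 t).sub ((hasDerivAt_pow 3 t).const_mul (2/3))).sub
      ((hasDerivAt_id' t).const_mul δ)).congr_deriv (by norm_num; ring)
  rw [intervalIntegral.integral_eq_sub_of_hasDerivAt h
    (Continuous.intervalIntegrable (by fun_prop) _ _)]
  norm_num

theorem le_ECE_staircasePredictor {δ : ℝ} (hδ : 0 < δ) (hδ2 : δ < 2) :
    1/3 - δ ≤ ECE propDist (staircasePredictor δ) := by
  have hm₁ : Measurable fun t => |1 - staircase₁ δ t| :=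
    (measurable_const.sub (measurable_staircase₁ δ)).abs
  have hm₀ : Measurable fun t => |staircase₀ δ t| := (measurable_staircase₀ δ).abs
  have hb₁ (t : ℝ) (ht : t ∈ Icc (0 : ℝ) 1) := abs_one_sub_staircase₁_bounds hδ (by linarith) ht
  have hb₀ (t : ℝ) (ht : t ∈ Icc (0 : ℝ) 1) := abs_staircase₀_bounds hδ (by linarith) ht
  rw [ECE_eq_integral_abs_sub (measurable_staircasePredictor δ) integrable_label
      (measurable_decodeLabel δ) (label_ae_eq_decodeLabel_staircasePredictor hδ hδ2),
    integral_propDist_eq_intervalIntegral (f := fun q => |q.2 - staircasePredictor δ q.1|)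
      (measurable_snd.sub ((measurable_staircasePredictor δ).comp measurable_fst)).abs
      hm₁ hm₀ (fun t ht => by simpa only [abs_abs] using ⟨(hb₁ t ht).2, (hb₀ t ht).2⟩)
      fun x => by
        by_cases h : (1/2 : ℝ) ≤ x.2 <;>
          simp only [attachLabel, staircasePredictor, h, ite_true, ite_false, zero_sub, abs_neg],
    ← integral_quadratic_zero_one δ]
  have hint₁ := intervalIntegrable_of_abs_le zero_le_one hm₁ fun t ht => by
    simpa only [abs_abs] using (hb₁ t ht).2
  have hint₀ := intervalIntegrable_of_abs_le zero_le_one hm₀ fun t ht => by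
    simpa only [abs_abs] using (hb₀ t ht).2
  refine intervalIntegral.integral_mono_on zero_le_one
    (Continuous.intervalIntegrable (by fun_prop) _ _)
    ((hint₁.continuousOn_mul continuousOn_id).add
      (hint₀.continuousOn_mul (continuousOn_const.sub continuousOn_id)))
    fun t ht => add_le_add (mul_le_mul_of_nonneg_left (hb₁ t ht).1 ht.1)
      (mul_le_mul_of_nonneg_left (hb₀ t ht).1 (sub_nonneg.2 ht.2))

/-- For the distribution above: `P(Y = 1 | X₁ = x₁) = x₁`, so the
predictor `g(x) = x₁` satisfies `ECE_π(g) = 0`; nevertheless `ECE_π` is discontinuous at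
`g` in the `L^∞` topology: for every `δ > 0` there is a predictor `g_δ` with
`‖g_δ − g‖_∞ < δ` and `ECE_π(g_δ) ≥ 1/3 − 2δ`. -/
theorem stmt19 :
    ((propDist[(fun q : (ℝ × ℝ) × ℝ => q.2) |
        MeasurableSpace.comap (fun q : (ℝ × ℝ) × ℝ => q.1.1) Real.measurableSpace])
      =ᵐ[propDist] fun q => q.1.1) ∧
    ECE propDist (fun x => x.1) = 0 ∧
    ∀ δ : ℝ, 0 < δ → ∃ gδ : ℝ × ℝ → ℝ, Measurable gδ ∧
      (∀ x : ℝ × ℝ, |gδ x - x.1| < δ) ∧ 1/3 - 2*δ ≤ ECE propDist gδ := by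
  have hcalibrated : ECE propDist (fun x => x.1) = 0 :=
    ECE_eq_zero_of_condExp_ae_eq propDist_condExp_label_fst
  refine ⟨propDist_condExp_label_fst, hcalibrated, fun δ hδ => ?_⟩
  rcases lt_or_ge δ (1/6) with hsmall | hlarge
  · exact ⟨staircasePredictor δ, measurable_staircasePredictor δ,
      abs_staircasePredictor_sub_lt hδ (by linarith),
      by linarith [le_ECE_staircasePredictor hδ (by linarith : δ < 2)]⟩
  · -- for `δ ≥ 1/6` the bound `1/3 - 2δ` is nonpositive, so `g` itself will do
    exact ⟨fun x => x.1, measurable_fst, by simpa using hδ, by linarith⟩
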